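/- Let E ⊆ {1,...,m} and let w be a word which pseudo-mixes E with contraction factor τ ∈ (0,1). Then there exists a vector x of norm 1 with support exactly E, and a constant c > 0, such that for every k ≥ 1 and every norm-1 nonnegative vector v with support E, d_H(v·w^k, x) ≤ c·τ^k. -/

import Mathlib

/-!
Work in Hilbert's projective metric `d_H`. Each row of `M_w` indexed by `E` is zero or positive
exactly on `E`, so for `u` of support `E` the vector `u M_w` lies between `(∑_{i∈S} uᵢ) q` and
`(∑_{i∈S} uᵢ) p`, where `S` is the set of positive rows and `p`, `q` are the columnwise maxima and
minima over `S`. Hence `v ↦ v M_w` has image of finite `d_H`-diameter `D`, and the contraction gives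
`d_H(u·wⁿ⁺¹, v·wⁿ⁺¹) ≤ τⁿ D` uniformly in `u, v`. The normalised iterates of one vector are then a
Cauchy sequence, because on norm-one vectors `d_H` dominates the coordinatewise distance; their
limit `x` keeps support `E` since all iterates stay within `d_H`-distance `D` of the first one, and
the triangle inequality through the iterates of that vector gives the rate `2 D τⁿ`.
-/

/-- l1 norm of a vector in ℝ^m. -/
noncomputable def l1 {m : ℕ} (v : Fin m → ℝ) : ℝ := ∑ i, |v i|

/-- Support of a vector: the set of indices where it is positive. -/
noncomputable def supp {m : ℕ} (v : Fin m → ℝ) : Finset (Fin m) :=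
  Finset.univ.filter fun i => 0 < v i

/-- Hilbert projective distance between two vectors with common nonempty support `E`. -/
noncomputable def dH {m : ℕ} (E : Finset (Fin m)) (hE : E.Nonempty) (u v : Fin m → ℝ) : ℝ :=
  Real.log (E.sup' hE fun i => u i / v i) + Real.log (E.sup' hE fun i => v i / u i)


/-- Product of matrices along a word. -/
noncomputable def Mprod {A : Type*} {m : ℕ} (M : A → Matrix (Fin m) (Fin m) ℝ)
    (w : List A) : Matrix (Fin m) (Fin m) ℝ := (w.map M).prod

/-- Action of a word on a subset of indices: `E · w = supp(v_E M_w)`. -/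
noncomputable def Eact {A : Type*} {m : ℕ} (M : A → Matrix (Fin m) (Fin m) ℝ)
    (E : Finset (Fin m)) (w : List A) : Finset (Fin m) :=
  supp (Matrix.vecMul (fun i => if i ∈ E then (1 : ℝ) else 0) (Mprod M w))

/-- `w` pseudo-mixes `E`: `E·w = E` and each singleton of `E` is sent to `E` or `∅`. -/
def PseudoMixes {A : Type*} {m : ℕ} (M : A → Matrix (Fin m) (Fin m) ℝ)
    (E : Finset (Fin m)) (w : List A) : Prop :=
  Eact M E w = E ∧ ∀ i ∈ E, Eact M {i} w = E ∨ Eact M {i} w = ∅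

open Filter Topology Finset Real Matrix

section HilbertMetric

variable {m : ℕ} {E : Finset (Fin m)}

def PosOn (E : Finset (Fin m)) (v : Fin m → ℝ) : Prop :=
  (∀ i ∈ E, 0 < v i) ∧ ∀ i ∉ E, v i = 0

lemma posOn_iff {v : Fin m → ℝ} : PosOn E v ↔ 0 ≤ v ∧ supp v = E := by
  constructor
  · rintro ⟨hpos, hzero⟩
    refine ⟨fun i => ?_, ?_⟩
    · by_cases hi : i ∈ E
      · exact (hpos i hi).le
      · exact (hzero i hi).ge
    · ext i
      simp only [supp, mem_filter, mem_univ, true_and]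
      exact ⟨fun h => by_contra fun hi => h.ne' (hzero i hi), hpos i⟩
  · rintro ⟨hnonneg, rfl⟩
    refine ⟨fun i hi => by simpa [supp] using hi, fun i hi => ?_⟩
    simp only [supp, mem_filter, mem_univ, true_and, not_lt] at hi
    exact le_antisymm hi (hnonneg i)

namespace PosOn

variable {v : Fin m → ℝ}

lemma nonneg (hv : PosOn E v) : 0 ≤ v := (posOn_iff.1 hv).1

lemma supp_eq (hv : PosOn E v) : supp v = E := (posOn_iff.1 hv).2

lemma smul {c : ℝ} (hc : 0 < c) (hv : PosOn E v) : PosOn E (c • v) :=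
  ⟨fun i hi => mul_pos hc (hv.1 i hi), fun i hi => by simp [hv.2 i hi]⟩

lemma l1_eq_sum (hv : PosOn E v) : l1 v = ∑ i ∈ E, v i := by
  rw [l1, ← sum_subset (subset_univ E) fun i _ hi => by simp [hv.2 i hi]]
  exact sum_congr rfl fun i hi => abs_of_pos (hv.1 i hi)

lemma l1_pos (hE : E.Nonempty) (hv : PosOn E v) : 0 < l1 v := by
  rw [hv.l1_eq_sum]
  exact sum_pos hv.1 hE

end PosOn

lemma posOn_indicator : PosOn E fun i => if i ∈ E then (1 : ℝ) else 0 :=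
  ⟨fun i hi => by simp [hi], fun i hi => by simp [hi]⟩

lemma continuous_l1 : Continuous (l1 : (Fin m → ℝ) → ℝ) := by
  unfold l1
  fun_prop

lemma apply_le_l1 (v : Fin m → ℝ) (i : Fin m) : v i ≤ l1 v :=
  (le_abs_self _).trans (single_le_sum (fun j _ => abs_nonneg (v j)) (mem_univ i))

lemma l1_nonneg (v : Fin m → ℝ) : 0 ≤ l1 v := sum_nonneg fun i _ => abs_nonneg (v i)

lemma l1_smul (c : ℝ) (v : Fin m → ℝ) : l1 (c • v) = |c| * l1 v := by
  simp only [l1, Pi.smul_apply, smul_eq_mul, abs_mul, mul_sum]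

lemma l1_inv_l1_smul {v : Fin m → ℝ} (hv : l1 v ≠ 0) : l1 ((l1 v)⁻¹ • v) = 1 := by
  rw [l1_smul, abs_of_nonneg (inv_nonneg.2 (l1_nonneg v)), inv_mul_cancel₀ hv]

variable (hE : E.Nonempty) {u v x : Fin m → ℝ}

lemma sup'_div_pos (hu : PosOn E u) (hv : PosOn E v) : 0 < E.sup' hE fun i => u i / v i := by
  obtain ⟨i, hi⟩ := id hE
  exact (div_pos (hu.1 i hi) (hv.1 i hi)).trans_le (le_sup' (fun i => u i / v i) hi)

lemma le_sup'_div_mul {i : Fin m} (hi : i ∈ E) (hvi : 0 < v i) :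
    u i ≤ (E.sup' hE fun j => u j / v j) * v i := by
  rw [← div_le_iff₀ hvi]
  exact le_sup' (fun j => u j / v j) hi

lemma one_le_sup'_div (hu : PosOn E u) (hv : PosOn E v) (huv : l1 u = l1 v) :
    1 ≤ E.sup' hE fun i => u i / v i := by
  have h : l1 u ≤ (E.sup' hE fun i => u i / v i) * l1 v := by
    rw [hu.l1_eq_sum, hv.l1_eq_sum, mul_sum]
    exact sum_le_sum fun i hi => le_sup'_div_mul hE hi (hv.1 i hi)
  rw [huv] at h
  exact le_of_mul_le_mul_right (by simpa using h) (hv.l1_pos hE)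

lemma dH_comm : dH E hE u v = dH E hE v u := add_comm _ _

lemma exp_dH (hu : PosOn E u) (hv : PosOn E v) :
    exp (dH E hE u v) = (E.sup' hE fun i => u i / v i) * E.sup' hE fun i => v i / u i := by
  rw [dH, exp_add, exp_log (sup'_div_pos hE hu hv), exp_log (sup'_div_pos hE hv hu)]

lemma dH_nonneg (hu : PosOn E u) (hv : PosOn E v) : 0 ≤ dH E hE u v := by
  obtain ⟨i, hi⟩ := id hE
  have hprod : 1 ≤ (E.sup' hE fun i => u i / v i) * E.sup' hE fun i => v i / u i :=
    calc (1 : ℝ) = u i / v i * (v i / u i) := by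
          field_simp [(hu.1 i hi).ne', (hv.1 i hi).ne']
      _ ≤ _ := mul_le_mul (le_sup' (fun i => u i / v i) hi) (le_sup' (fun i => v i / u i) hi)
          (div_pos (hv.1 i hi) (hu.1 i hi)).le (sup'_div_pos hE hu hv).le
  rw [← exp_dH hE hu hv] at hprod
  simpa using hprod

lemma log_sup'_div_le_add (hu : PosOn E u) (hv : PosOn E v) (hx : PosOn E x) :
    log (E.sup' hE fun i => u i / x i) ≤
      log (E.sup' hE fun i => u i / v i) + log (E.sup' hE fun i => v i / x i) := by
  rw [← log_mul (sup'_div_pos hE hu hv).ne' (sup'_div_pos hE hv hx).ne']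
  refine log_le_log (sup'_div_pos hE hu hx) (sup'_le _ _ fun i hi => ?_)
  calc u i / x i = u i / v i * (v i / x i) := by field_simp [(hv.1 i hi).ne']
    _ ≤ _ := mul_le_mul (le_sup' (fun i => u i / v i) hi) (le_sup' (fun i => v i / x i) hi)
        (div_pos (hv.1 i hi) (hx.1 i hi)).le (sup'_div_pos hE hu hv).le

lemma dH_triangle (hu : PosOn E u) (hv : PosOn E v) (hx : PosOn E x) :
    dH E hE u x ≤ dH E hE u v + dH E hE v x := by
  have h₁ := log_sup'_div_le_add hE hu hv hx
  have h₂ := log_sup'_div_le_add hE hx hv hu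
  simp only [dH]
  linarith

lemma dH_smul_left {c : ℝ} (hc : 0 < c) (hu : PosOn E u) (hv : PosOn E v) :
    dH E hE (c • u) v = dH E hE u v := by
  have h₁ : (E.sup' hE fun i => (c • u) i / v i) = c * E.sup' hE fun i => u i / v i := by
    rw [mul₀_sup' hc.le]
    simp [mul_div_assoc]
  have h₂ : (E.sup' hE fun i => v i / (c • u) i) = c⁻¹ * E.sup' hE fun i => v i / u i := by
    rw [mul₀_sup' (inv_nonneg.2 hc.le)]
    simp only [Pi.smul_apply, smul_eq_mul, div_mul_eq_div_div_swap, div_eq_inv_mul _ c]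
  rw [dH, dH, h₁, h₂, log_mul hc.ne' (sup'_div_pos hE hu hv).ne',
    log_mul (inv_ne_zero hc.ne') (sup'_div_pos hE hv hu).ne', log_inv]
  ring

lemma dH_inv_l1_smul_left (hu : PosOn E u) (hv : PosOn E v) :
    dH E hE ((l1 u)⁻¹ • u) v = dH E hE u v :=
  dH_smul_left hE (inv_pos.2 (hu.l1_pos hE)) hu hv

lemma dH_inv_l1_smul_right (hu : PosOn E u) (hv : PosOn E v) :
    dH E hE u ((l1 v)⁻¹ • v) = dH E hE u v := by
  rw [dH_comm, dH_inv_l1_smul_left hE hv hu, dH_comm]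

lemma apply_le_exp_dH_mul (hu : PosOn E u) (hv : PosOn E v) (huv : l1 u = l1 v) {i : Fin m}
    (hi : i ∈ E) : v i ≤ exp (dH E hE u v) * u i := by
  rw [exp_dH hE hu hv]
  calc v i ≤ (E.sup' hE fun i => v i / u i) * u i := le_sup'_div_mul hE hi (hu.1 i hi)
    _ ≤ _ := mul_le_mul_of_nonneg_right
        (le_mul_of_one_le_left (sup'_div_pos hE hv hu).le (one_le_sup'_div hE hu hv huv))
        (hu.1 i hi).le

lemma dist_le_exp_dH_sub_one (hu : PosOn E u) (hv : PosOn E v) (hu1 : l1 u = 1)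
    (hv1 : l1 v = 1) : dist u v ≤ exp (dH E hE u v) - 1 := by
  rw [dist_pi_le_iff (sub_nonneg.2 (one_le_exp (dH_nonneg hE hu hv)))]
  intro i
  by_cases hi : i ∈ E
  · have ha := one_le_sup'_div hE hu hv (hu1.trans hv1.symm)
    have hb := one_le_sup'_div hE hv hu (hv1.trans hu1.symm)
    have hua := le_sup'_div_mul hE (u := u) hi (hv.1 i hi)
    have hvb := le_sup'_div_mul hE (u := v) hi (hu.1 i hi)
    have hu_le := hu1 ▸ apply_le_l1 u i
    have hv_le := hv1 ▸ apply_le_l1 v i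
    rw [Real.dist_eq, abs_sub_le_iff, exp_dH hE hu hv]
    constructor <;> nlinarith [hu.1 i hi, hv.1 i hi]
  · rw [hu.2 i hi, hv.2 i hi, dist_self]
    exact sub_nonneg.2 (one_le_exp (dH_nonneg hE hu hv))

lemma tendsto_dH {α : Type*} {l : Filter α} {y : α → Fin m → ℝ} (hu : PosOn E u) (hx : PosOn E x)
    (hy : Tendsto y l (𝓝 x)) : Tendsto (fun a => dH E hE u (y a)) l (𝓝 (dH E hE u x)) := by
  have hyi := tendsto_pi_nhds.1 hy
  have h₁ : Tendsto (fun a => E.sup' hE fun i => u i / y a i) l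
      (𝓝 (E.sup' hE fun i => u i / x i)) :=
    Tendsto.finset_sup'_nhds_apply hE fun i hi => tendsto_const_nhds.div (hyi i) (hx.1 i hi).ne'
  have h₂ : Tendsto (fun a => E.sup' hE fun i => y a i / u i) l
      (𝓝 (E.sup' hE fun i => x i / u i)) :=
    Tendsto.finset_sup'_nhds_apply hE fun i _ => (hyi i).div_const (u i)
  exact ((continuousAt_log (sup'_div_pos hE hu hx).ne').tendsto.comp h₁).add
    ((continuousAt_log (sup'_div_pos hE hx hu).ne').tendsto.comp h₂)

theorem exists_limit_of_dH_le {y : ℕ → Fin m → ℝ} (hy : ∀ n, PosOn E (y n))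
    (hy1 : ∀ n, l1 (y n) = 1) {b : ℕ → ℝ} (hb : Tendsto b atTop (𝓝 0))
    (hyb : ∀ N n l, N ≤ n → N ≤ l → dH E hE (y n) (y l) ≤ b N) :
    ∃ x, PosOn E x ∧ l1 x = 1 ∧ ∀ n, dH E hE (y n) x ≤ b n := by
  have hcauchy : CauchySeq y := by
    refine cauchySeq_of_le_tendsto_0 (fun N => exp (b N) - 1) (fun n l N hn hl => ?_) ?_
    · exact (dist_le_exp_dH_sub_one hE (hy n) (hy l) (hy1 n) (hy1 l)).trans
        (by gcongr; exact hyb N n l hn hl)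
    · simpa using ((continuous_exp.tendsto 0).comp hb).sub_const 1
  obtain ⟨x, hx⟩ := cauchySeq_tendsto_of_complete hcauchy
  have hxi := tendsto_pi_nhds.1 hx
  -- every `y n` is within a bounded ratio of `y 0`, so no coordinate of the limit vanishes on `E`
  have hxE : PosOn E x := by
    refine ⟨fun i hi => ?_, fun i hi => tendsto_nhds_unique (hxi i) (by simp [(hy _).2 i hi])⟩
    have hbound : ∀ n, y 0 i ≤ exp (b 0) * y n i := fun n =>
      (apply_le_exp_dH_mul hE (hy n) (hy 0) ((hy1 n).trans (hy1 0).symm) hi).trans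
        (mul_le_mul_of_nonneg_right (exp_le_exp.2 (hyb 0 n 0 n.zero_le le_rfl))
          ((hy n).nonneg i))
    have hlim : y 0 i ≤ exp (b 0) * x i :=
      ge_of_tendsto ((hxi i).const_mul _) (Eventually.of_forall hbound)
    exact pos_of_mul_pos_right (((hy 0).1 i hi).trans_le hlim) (exp_pos _).le
  have hx1 : l1 x = 1 :=
    tendsto_nhds_unique ((continuous_l1.tendsto x).comp hx) (by simp [Function.comp_def, hy1])
  exact ⟨x, hxE, hx1, fun n => le_of_tendsto (tendsto_dH hE (hy n) hxE hx)
    (eventually_atTop.2 ⟨n, fun l hl => hyb n n l le_rfl hl⟩)⟩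

end HilbertMetric

section Squeezing

variable {m : ℕ} {E : Finset (Fin m)} (hE : E.Nonempty) {u v p q : Fin m → ℝ} {a b : ℝ}

lemma log_sup'_div_le (hu : PosOn E u) (hv : PosOn E v) (ha : 0 < a) (hb : 0 < b)
    (hq : ∀ j ∈ E, 0 < q j) (hup : ∀ j ∈ E, u j ≤ a * p j) (hvq : ∀ j ∈ E, b * q j ≤ v j) :
    log (E.sup' hE fun j => u j / v j) ≤ log a - log b + log (E.sup' hE fun j => p j / q j) := by
  set C := E.sup' hE fun j => p j / q j
  have hsup : (E.sup' hE fun j => u j / v j) ≤ a / b * C := sup'_le _ _ fun j hj =>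
    calc u j / v j ≤ a * p j / (b * q j) :=
          div_le_div₀ ((hu.1 j hj).le.trans (hup j hj)) (hup j hj) (mul_pos hb (hq j hj))
            (hvq j hj)
      _ = a / b * (p j / q j) := mul_div_mul_comm _ _ _ _
      _ ≤ a / b * C := mul_le_mul_of_nonneg_left (le_sup' (fun j => p j / q j) hj)
          (div_pos ha hb).le
  have hpos := sup'_div_pos hE hu hv
  have hC : 0 < C := pos_of_mul_pos_right (hpos.trans_le hsup) (div_pos ha hb).le
  calc log (E.sup' hE fun j => u j / v j) ≤ log (a / b * C) := log_le_log hpos hsup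
    _ = log a - log b + log C := by rw [log_mul (div_pos ha hb).ne' hC.ne', log_div ha.ne' hb.ne']

lemma dH_le_of_squeeze (hu : PosOn E u) (hv : PosOn E v) (ha : 0 < a) (hb : 0 < b)
    (hq : ∀ j ∈ E, 0 < q j) (hu' : ∀ j ∈ E, a * q j ≤ u j ∧ u j ≤ a * p j)
    (hv' : ∀ j ∈ E, b * q j ≤ v j ∧ v j ≤ b * p j) :
    dH E hE u v ≤ 2 * log (E.sup' hE fun j => p j / q j) := by
  have h₁ := log_sup'_div_le hE hu hv ha hb hq (fun j hj => (hu' j hj).2) fun j hj => (hv' j hj).1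
  have h₂ := log_sup'_div_le hE hv hu hb ha hq (fun j hj => (hv' j hj).2) fun j hj => (hu' j hj).1
  rw [dH]
  linarith

end Squeezing

section RowStructure

variable {m : ℕ} {E : Finset (Fin m)} {N : Matrix (Fin m) (Fin m) ℝ}

def RowsPosOnOrZero (E : Finset (Fin m)) (N : Matrix (Fin m) (Fin m) ℝ) : Prop :=
  ∀ i ∈ E, PosOn E (N i) ∨ N i = 0

open Classical in
noncomputable def posRows (E : Finset (Fin m)) (N : Matrix (Fin m) (Fin m) ℝ) : Finset (Fin m) :=
  E.filter fun i => PosOn E (N i)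

lemma mem_posRows {i : Fin m} : i ∈ posRows E N ↔ i ∈ E ∧ PosOn E (N i) := by
  classical
  exact mem_filter

lemma vecMul_apply_eq_sum_posRows (hN : RowsPosOnOrZero E N) {v : Fin m → ℝ} (hv : PosOn E v)
    (j : Fin m) : (v ᵥ* N) j = ∑ i ∈ posRows E N, v i * N i j := by
  refine (sum_subset (subset_univ (posRows E N)) fun i _ hi => ?_).symm
  by_cases hiE : i ∈ E
  · have hzero := (hN i hiE).resolve_left fun hpos => hi (mem_posRows.2 ⟨hiE, hpos⟩)
    simp [hzero]
  · simp [hv.2 i hiE]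

variable {v : Fin m → ℝ}

lemma PosOn.vecMul (hN : RowsPosOnOrZero E N) (hS : (posRows E N).Nonempty) (hv : PosOn E v) :
    PosOn E (v ᵥ* N) := by
  refine ⟨fun j hj => ?_, fun j hj => ?_⟩ <;> rw [vecMul_apply_eq_sum_posRows hN hv]
  · exact sum_pos (fun i hi => mul_pos (hv.1 i (mem_posRows.1 hi).1) ((mem_posRows.1 hi).2.1 j hj))
      hS
  · exact sum_eq_zero fun i hi => by rw [(mem_posRows.1 hi).2.2 j hj, mul_zero]

lemma vecMul_apply_mem_Icc (hN : RowsPosOnOrZero E N) (hS : (posRows E N).Nonempty)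
    (hv : PosOn E v) (j : Fin m) :
    (v ᵥ* N) j ∈ Set.Icc ((∑ i ∈ posRows E N, v i) * (posRows E N).inf' hS fun i => N i j)
      ((∑ i ∈ posRows E N, v i) * (posRows E N).sup' hS fun i => N i j) := by
  have hv' : ∀ i ∈ posRows E N, 0 ≤ v i := fun i _ => hv.nonneg i
  rw [vecMul_apply_eq_sum_posRows hN hv, sum_mul, sum_mul]
  exact ⟨sum_le_sum fun i hi => mul_le_mul_of_nonneg_left (inf'_le _ hi) (hv' i hi),
    sum_le_sum fun i hi => mul_le_mul_of_nonneg_left (le_sup' (fun i => N i j) hi) (hv' i hi)⟩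

lemma exists_dH_vecMul_le (hE : E.Nonempty) (hN : RowsPosOnOrZero E N)
    (hS : (posRows E N).Nonempty) :
    ∃ D, ∀ u v, PosOn E u → PosOn E v → dH E hE (u ᵥ* N) (v ᵥ* N) ≤ D := by
  have hq : ∀ j ∈ E, 0 < (posRows E N).inf' hS fun i => N i j := fun j hj =>
    (lt_inf'_iff hS).2 fun i hi => (mem_posRows.1 hi).2.1 j hj
  have hmass : ∀ v, PosOn E v → 0 < ∑ i ∈ posRows E N, v i := fun v hv =>
    sum_pos (fun i hi => hv.1 i (mem_posRows.1 hi).1) hS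
  exact ⟨_, fun u v hu hv => dH_le_of_squeeze hE (hu.vecMul hN hS) (hv.vecMul hN hS)
    (hmass u hu) (hmass v hv) hq (fun j _ => vecMul_apply_mem_Icc hN hS hu j)
    (fun j _ => vecMul_apply_mem_Icc hN hS hv j)⟩

end RowStructure

section Iteration

variable {m : ℕ} {E : Finset (Fin m)} (hE : E.Nonempty) {T : (Fin m → ℝ) → Fin m → ℝ} {τ D : ℝ}

lemma PosOn.iterate (hT : ∀ v, PosOn E v → PosOn E (T v)) (n : ℕ) {v : Fin m → ℝ}
    (hv : PosOn E v) : PosOn E (T^[n] v) := by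
  induction n with
  | zero => exact hv
  | succ n ih => rw [Function.iterate_succ_apply']; exact hT _ ih

lemma dH_iterate_succ_le (hT : ∀ v, PosOn E v → PosOn E (T v)) (hτ : 0 ≤ τ)
    (hcontr : ∀ u v, PosOn E u → PosOn E v → dH E hE (T u) (T v) ≤ τ * dH E hE u v)
    (hdiam : ∀ u v, PosOn E u → PosOn E v → dH E hE (T u) (T v) ≤ D) (n : ℕ)
    {u v : Fin m → ℝ} (hu : PosOn E u) (hv : PosOn E v) :
    dH E hE (T^[n + 1] u) (T^[n + 1] v) ≤ τ ^ n * D := by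
  induction n with
  | zero => simpa using hdiam u v hu hv
  | succ n ih =>
    rw [Function.iterate_succ_apply' T (n + 1), Function.iterate_succ_apply' T (n + 1)]
    calc _ ≤ τ * dH E hE (T^[n + 1] u) (T^[n + 1] v) :=
          hcontr _ _ (hu.iterate hT (n + 1)) (hv.iterate hT (n + 1))
      _ ≤ τ * (τ ^ n * D) := mul_le_mul_of_nonneg_left ih hτ
      _ = τ ^ (n + 1) * D := by ring

theorem exists_dH_iterate_le (hT : ∀ v, PosOn E v → PosOn E (T v)) (hτ0 : 0 < τ) (hτ1 : τ < 1)
    (hcontr : ∀ u v, PosOn E u → PosOn E v → dH E hE (T u) (T v) ≤ τ * dH E hE u v)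
    (hdiam : ∀ u v, PosOn E u → PosOn E v → dH E hE (T u) (T v) ≤ D) :
    ∃ x, PosOn E x ∧ l1 x = 1 ∧ ∃ c > 0, ∀ k, 1 ≤ k → ∀ v, PosOn E v →
      dH E hE (T^[k] v) x ≤ c * τ ^ k := by
  have hiter := dH_iterate_succ_le hE hT hτ0.le hcontr hdiam
  set v₀ : Fin m → ℝ := fun i => if i ∈ E then 1 else 0
  have hz : ∀ n, PosOn E (T^[n + 1] v₀) := fun n => posOn_indicator.iterate hT (n + 1)
  set y : ℕ → Fin m → ℝ := fun n => (l1 (T^[n + 1] v₀))⁻¹ • T^[n + 1] v₀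
  have hy : ∀ n, PosOn E (y n) := fun n => (hz n).smul (inv_pos.2 ((hz n).l1_pos hE))
  have hy1 : ∀ n, l1 (y n) = 1 := fun n => l1_inv_l1_smul ((hz n).l1_pos hE).ne'
  have hyb : ∀ N n l, N ≤ n → N ≤ l → dH E hE (y n) (y l) ≤ τ ^ N * D := by
    intro N n l hn hl
    obtain ⟨n, rfl⟩ := Nat.exists_eq_add_of_le hn
    obtain ⟨l, rfl⟩ := Nat.exists_eq_add_of_le hl
    have hshift : ∀ r, T^[N + r + 1] v₀ = T^[N + 1] (T^[r] v₀) := fun r => by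
      rw [← Function.iterate_add_apply, add_right_comm]
    simp only [y]
    rw [dH_inv_l1_smul_left hE (hz _) (hy _), dH_inv_l1_smul_right hE (hz _) (hz _), hshift, hshift]
    exact hiter N (posOn_indicator.iterate hT n) (posOn_indicator.iterate hT l)
  have hb : Tendsto (fun N => τ ^ N * D) atTop (𝓝 0) := by
    simpa using (tendsto_pow_atTop_nhds_zero_of_lt_one hτ0.le hτ1).mul_const D
  obtain ⟨x, hx, hx1, hyx⟩ := exists_limit_of_dH_le hE hy hy1 hb hyb
  have hD : 0 ≤ D := (dH_nonneg hE (hT x hx) (hT x hx)).trans (hdiam x x hx hx)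
  refine ⟨x, hx, hx1, 2 * (D + 1) / τ, by positivity, fun k hk v hv => ?_⟩
  obtain ⟨n, rfl⟩ := Nat.exists_eq_add_of_le' hk
  have hτn := pow_pos hτ0 n
  calc dH E hE (T^[n + 1] v) x
      ≤ dH E hE (T^[n + 1] v) (T^[n + 1] v₀) + dH E hE (T^[n + 1] v₀) x :=
        dH_triangle hE (hv.iterate hT _) (hz n) hx
    _ ≤ τ ^ n * D + τ ^ n * D := add_le_add (hiter n hv posOn_indicator)
        (by simpa only [y, dH_inv_l1_smul_left hE (hz n) hx] using hyx n)
    _ ≤ 2 * (D + 1) * τ ^ n := by nlinarith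
    _ = 2 * (D + 1) / τ * τ ^ (n + 1) := by field_simp; ring

end Iteration

section Words

variable {A : Type*} {m : ℕ} {M : A → Matrix (Fin m) (Fin m) ℝ} {E : Finset (Fin m)} {w : List A}

lemma Mprod_nonneg (hM : ∀ a i j, 0 ≤ M a i j) (w : List A) (i j : Fin m) :
    0 ≤ Mprod M w i j := by
  induction w generalizing i j with
  | nil => by_cases h : i = j <;> simp [Mprod, h]
  | cons a w ih =>
    simp only [Mprod, List.map_cons, List.prod_cons, Matrix.mul_apply] at ih ⊢
    exact sum_nonneg fun k _ => mul_nonneg (hM a i k) (ih k j)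

lemma Mprod_flatten_replicate (M : A → Matrix (Fin m) (Fin m) ℝ) (k : ℕ) (w : List A) :
    Mprod M (List.replicate k w).flatten = Mprod M w ^ k := by
  simp [Mprod, List.map_flatten, List.prod_flatten, List.map_replicate, List.prod_replicate]

lemma vecMul_pow (v : Fin m → ℝ) (N : Matrix (Fin m) (Fin m) ℝ) (k : ℕ) :
    v ᵥ* N ^ k = (· ᵥ* N)^[k] v := by
  induction k with
  | zero => simp
  | succ k ih => rw [pow_succ, ← vecMul_vecMul, ih, Function.iterate_succ_apply']

lemma Eact_singleton (i : Fin m) : Eact M {i} w = supp (Mprod M w i) := by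
  unfold Eact
  congr 1
  ext j
  simp [vecMul, dotProduct]

lemma mem_Eact {j : Fin m} : j ∈ Eact M E w ↔ 0 < ∑ i ∈ E, Mprod M w i j := by
  simp [Eact, supp, vecMul, dotProduct]

lemma PseudoMixes.rowsPosOnOrZero (hM : ∀ a i j, 0 ≤ M a i j) (hw : PseudoMixes M E w) :
    RowsPosOnOrZero E (Mprod M w) := by
  intro i hi
  have hrow : 0 ≤ Mprod M w i := Mprod_nonneg hM w i
  rcases hw.2 i hi with h | h <;> rw [Eact_singleton] at h
  · exact .inl (posOn_iff.2 ⟨hrow, h⟩)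
  · exact .inr (funext fun j => (posOn_iff.2 ⟨hrow, h⟩).2 j (notMem_empty j))

lemma PseudoMixes.posRows_nonempty (hE : E.Nonempty) (hM : ∀ a i j, 0 ≤ M a i j)
    (hw : PseudoMixes M E w) : (posRows E (Mprod M w)).Nonempty := by
  obtain ⟨j, hj⟩ := hE
  have hcol : 0 < ∑ i ∈ E, Mprod M w i j := mem_Eact.1 (hw.1.symm ▸ hj)
  obtain ⟨i, hi, hij⟩ := exists_ne_zero_of_sum_ne_zero hcol.ne'
  rcases hw.rowsPosOnOrZero hM i hi with hrow | hrow
  · exact ⟨i, mem_posRows.2 ⟨hi, hrow⟩⟩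
  · exact absurd (congrFun hrow j) hij

end Words

/-- Iterating a pseudo-mixing word with contraction factor `τ` drives all directions
exponentially fast to a single limit direction `x`. -/
theorem stmt8 {A : Type*} {m : ℕ}
    (M : A → Matrix (Fin m) (Fin m) ℝ) (hM : ∀ a i j, 0 ≤ M a i j)
    (E : Finset (Fin m)) (hE : E.Nonempty) (w : List A) (hw : PseudoMixes M E w)
    (τ : ℝ) (hτ0 : 0 < τ) (hτ1 : τ < 1)
    (hcontr : ∀ u v : Fin m → ℝ, 0 ≤ u → 0 ≤ v → supp u = E → supp v = E →
      dH E hE (Matrix.vecMul u (Mprod M w)) (Matrix.vecMul v (Mprod M w)) ≤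
        τ * dH E hE u v) :
    ∃ x : Fin m → ℝ, 0 ≤ x ∧ l1 x = 1 ∧ supp x = E ∧
      ∃ c > 0, ∀ k : ℕ, 1 ≤ k → ∀ v : Fin m → ℝ, 0 ≤ v → l1 v = 1 → supp v = E →
        dH E hE
          ((l1 (Matrix.vecMul v (Mprod M ((List.replicate k w).flatten))))⁻¹ •
            Matrix.vecMul v (Mprod M ((List.replicate k w).flatten))) x ≤ c * τ ^ k := by
  have hN := hw.rowsPosOnOrZero hM
  have hS := hw.posRows_nonempty hE hM
  have hT : ∀ v, PosOn E v → PosOn E (v ᵥ* Mprod M w) := fun v hv => hv.vecMul hN hS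
  obtain ⟨D, hD⟩ := exists_dH_vecMul_le hE hN hS
  obtain ⟨x, hx, hx1, c, hc, hconv⟩ := exists_dH_iterate_le hE hT hτ0 hτ1
    (fun u v hu hv => hcontr u v hu.nonneg hv.nonneg hu.supp_eq hv.supp_eq) hD
  refine ⟨x, hx.nonneg, hx1, hx.supp_eq, c, hc, fun k hk v hv0 _ hvE => ?_⟩
  have hv : PosOn E v := posOn_iff.2 ⟨hv0, hvE⟩
  rw [Mprod_flatten_replicate, vecMul_pow]
  exact (dH_inv_l1_smul_left hE (hv.iterate hT k) hx).trans_le (hconv k hk v hv)
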